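/- arXiv:1908.11260 — 5 statements merged into one kernel-verified Lean document; each statement's English description precedes it below -/
import Mathlib

section
/- For any points p, q ∈ ℝ² and any real c ≥ 0, the set {x ∈ ℝ² : dist(x, q) + c ≤ dist(x, p)} is convex. (This is the region bounded by one branch of the hyperbola with foci p and q, on the side of the focus q.) -/
/-!
Each set `{x | dist x q ≤ dist x w}` is a half-space, bounded by the perpendicular bisector of
`q` and `w`. For `c ≤ dist p q` the hyperbolic region is the intersection of these half-spaces
over all `w` in the closed ball of radius `c` about `p`: a point `x` farther than `c` from `p`
is tested by the point `w` at distance `c` from `p` on the segment `[p, x]`, and a point within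
distance `c` of `p` is forced to be `q`. For `c > dist p q` the region is empty by the triangle
inequality.
-/

open Metric Set

open scoped RealInnerProductSpace

theorem convex_setOf_dist_le_dist {E : Type*} [NormedAddCommGroup E] [InnerProductSpace ℝ E]
    (q w : E) : Convex ℝ {x : E | dist x q ≤ dist x w} := by
  have half_space : ∀ x : E, dist x q ≤ dist x w ↔ ⟪w - q, x⟫ ≤ (‖w‖ ^ 2 - ‖q‖ ^ 2) / 2 := by
    intro x
    rw [← sq_le_sq₀ dist_nonneg dist_nonneg, dist_eq_norm, dist_eq_norm, norm_sub_sq_real,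
      norm_sub_sq_real, inner_sub_left, real_inner_comm x q, real_inner_comm x w]
    constructor <;> intro h <;> linarith
  simp_rw [half_space]
  exact convex_halfSpace_le (innerₗ E (w - q)).isLinear _

theorem setOf_dist_add_le_dist_eq_biInter {E : Type*} [NormedAddCommGroup E] [NormedSpace ℝ E]
    {p q : E} {c : ℝ} (hc : 0 ≤ c) (hcpq : c ≤ dist p q) :
    {x : E | dist x q + c ≤ dist x p} = ⋂ w ∈ closedBall p c, {x : E | dist x q ≤ dist x w} := by
  ext x
  simp only [mem_ofPred_eq, mem_iInter₂, mem_closedBall]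
  refine ⟨fun hx w hw => by linarith [dist_triangle x w p], fun hx => ?_⟩
  rcases le_or_gt (dist x p) c with hxp | hxp
  · obtain rfl : x = q := dist_le_zero.1 (by simpa using hx x hxp)
    simpa [dist_comm] using hcpq
  · have hd : 0 < dist x p := hc.trans_lt hxp
    set w := AffineMap.lineMap p x (c / dist x p)
    have hwp : dist w p = c := by
      rw [dist_lineMap_left, Real.norm_of_nonneg (by positivity), dist_comm p x]
      field_simp
    have hxw : dist x w = dist x p - c := by
      rw [dist_comm, dist_lineMap_right, Real.norm_of_nonneg, dist_comm p x]
      · field_simp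
      · rw [sub_nonneg, div_le_one hd]
        exact hxp.le
    linarith [hx w hwp.le]

theorem setOf_dist_add_le_dist_eq_empty {X : Type*} [PseudoMetricSpace X] {p q : X} {c : ℝ}
    (hcpq : dist p q < c) : {x : X | dist x q + c ≤ dist x p} = ∅ :=
  eq_empty_of_forall_notMem fun x (hx : dist x q + c ≤ dist x p) => by
    linarith [dist_triangle x q p, dist_comm p q]

/-- The region `{x : dist x q + c ≤ dist x p}` (bounded by one branch of a
hyperbola with foci `p`, `q`, on the side of the focus `q`) is convex, for `c ≥ 0`. -/
theorem hyperbola_branch_side_convex (p q : EuclideanSpace ℝ (Fin 2)) (c : ℝ) (hc : 0 ≤ c) :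
    Convex ℝ {x : EuclideanSpace ℝ (Fin 2) | dist x q + c ≤ dist x p} := by
  rcases le_or_gt c (dist p q) with hcpq | hcpq
  · rw [setOf_dist_add_le_dist_eq_biInter hc hcpq]
    exact convex_iInter₂ fun w _ => convex_setOf_dist_le_dist q w
  · rw [setOf_dist_add_le_dist_eq_empty hcpq]
    exact convex_empty
end

section
/- Let ι be a nonempty finite index set, q : ι → ℝ², f : ι → ℝ, and F(x) = max_{i ∈ ι} (dist(x, q_i) + f_i). Then there exists a unique point x* ∈ ℝ² such that F(x*) ≤ F(y) for all y ∈ ℝ²; that is, the smallest circle enclosing the circles C(q_i, f_i) has a unique center. -/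
/-!
`x ↦ maxᵢ (dist x (q i) + f i)` is continuous and tends to infinity at infinity, so it attains its
minimum. If `x ≠ y` were two minimizers with minimum `r`, pick `i` active at their midpoint `m`:
then `x` and `y` lie in the closed ball of radius `r - f i` about `q i`, and strict convexity of
the norm puts `m` strictly inside it, so the value at `m` would be below `r`.
-/

open Filter Finset Metric

theorem dist_midpoint_lt_of_ne {E : Type*} [NormedAddCommGroup E] [NormedSpace ℝ E]
    [StrictConvexSpace ℝ E] {x y p : E} {r : ℝ} (hx : dist x p ≤ r) (hy : dist y p ≤ r)
    (hne : x ≠ y) : dist (midpoint ℝ x y) p < r :=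
  mem_ball.1 <| openSegment_subset_ball_of_ne (mem_closedBall.2 hx) (mem_closedBall.2 hy) hne
    (midpoint_mem_openSegment x y)

section EnclosingRadius

variable {ι α : Type*} [Fintype ι] [Nonempty ι] [PseudoMetricSpace α]

noncomputable def enclosingRadius (q : ι → α) (f : ι → ℝ) (x : α) : ℝ :=
  univ.sup' univ_nonempty fun i => dist x (q i) + f i

variable (q : ι → α) (f : ι → ℝ)

theorem dist_add_le_enclosingRadius (x : α) (i : ι) :
    dist x (q i) + f i ≤ enclosingRadius q f x :=
  le_sup' (fun i => dist x (q i) + f i) (mem_univ i)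

theorem exists_enclosingRadius_eq (x : α) : ∃ i, enclosingRadius q f x = dist x (q i) + f i :=
  let ⟨i, _, hi⟩ := exists_mem_eq_sup' univ_nonempty fun i => dist x (q i) + f i
  ⟨i, hi⟩

theorem continuous_enclosingRadius : Continuous (enclosingRadius q f) :=
  Continuous.finset_sup'_apply univ_nonempty fun _ _ =>
    (continuous_id.dist continuous_const).add continuous_const

theorem tendsto_enclosingRadius_cocompact [ProperSpace α] :
    Tendsto (enclosingRadius q f) (cocompact α) atTop := by
  obtain ⟨i⟩ := ‹Nonempty ι›
  exact tendsto_atTop_mono (dist_add_le_enclosingRadius q f · i)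
    (tendsto_atTop_add_const_right _ _ (tendsto_dist_right_cocompact_atTop (q i)))

theorem exists_forall_enclosingRadius_le [ProperSpace α] [Nonempty α] :
    ∃ x, ∀ y, enclosingRadius q f x ≤ enclosingRadius q f y :=
  (continuous_enclosingRadius q f).exists_forall_le (tendsto_enclosingRadius_cocompact q f)

end EnclosingRadius

theorem eq_of_forall_enclosingRadius_le {ι E : Type*} [Fintype ι] [Nonempty ι]
    [NormedAddCommGroup E] [NormedSpace ℝ E] [StrictConvexSpace ℝ E] (q : ι → E) (f : ι → ℝ)
    {x y : E} (hx : ∀ z, enclosingRadius q f x ≤ enclosingRadius q f z)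
    (hy : ∀ z, enclosingRadius q f y ≤ enclosingRadius q f z) : x = y := by
  by_contra hne
  set r := enclosingRadius q f x
  have hyr : enclosingRadius q f y = r := le_antisymm (hy x) (hx y)
  obtain ⟨i, hi⟩ := exists_enclosingRadius_eq q f (midpoint ℝ x y)
  have hxi : dist x (q i) ≤ r - f i := by linarith [dist_add_le_enclosingRadius q f x i]
  have hyi : dist y (q i) ≤ r - f i := by linarith [dist_add_le_enclosingRadius q f y i]
  have hmid := dist_midpoint_lt_of_ne hxi hyi hne
  linarith [hx (midpoint ℝ x y)]

/-- The smallest circle enclosing the circles `C(q i, f i)` has a unique center: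
`F x = max_i (dist x (q i) + f i)` has a unique global minimizer. -/
theorem smallest_enclosing_circle_unique_center {ι : Type*} [Fintype ι] [Nonempty ι]
    (q : ι → EuclideanSpace ℝ (Fin 2)) (f : ι → ℝ)
    (F : EuclideanSpace ℝ (Fin 2) → ℝ)
    (hF : ∀ x, F x = Finset.univ.sup' Finset.univ_nonempty fun i => dist x (q i) + f i) :
    ∃! x : EuclideanSpace ℝ (Fin 2), ∀ y, F x ≤ F y := by
  obtain rfl : F = enclosingRadius q f := funext hF
  obtain ⟨x, hx⟩ := exists_forall_enclosingRadius_le q f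
  exact ⟨x, hx, fun y hy => eq_of_forall_enclosingRadius_le q f hy hx⟩
end

section
/- Optimality test on a chord: let ι be a nonempty finite index set, q : ι → ℝ², f : ι → ℝ, F(x) = max_{i ∈ ι} (dist(x, q_i) + f_i), and let c, u ∈ ℝ² and t₀ ∈ ℝ. Write x₀ = c + t₀·u. If there exist indices i, j with dist(x₀, q_i) + f_i = F(x₀), dist(x₀, q_j) + f_j = F(x₀), ⟨x₀ − q_i, u⟩ ≥ 0 and ⟨x₀ − q_j, u⟩ ≤ 0, then F(x₀) ≤ F(c + t·u) for all t ∈ ℝ, i.e., x₀ minimizes F along the line. (This is the test 'if the farthest-neighbor directions lie on different sides of the perpendicular to the chord, the point is the constrained center'.) -/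
/-!
Write a point of the line as `x₀ + s • u`. Whichever sign `s` has, one of the two farthest
indices `k` has `s * ⟪x₀ - q k, u⟫ ≥ 0`, so moving to `x₀ + s • u` does not decrease the distance
to `q k`; hence `F (x₀ + s • u) ≥ dist (x₀ + s • u) (q k) + f k ≥ F x₀`.
-/

open scoped RealInnerProductSpace

section

variable {E : Type*} [NormedAddCommGroup E] [InnerProductSpace ℝ E]

theorem norm_le_norm_add_smul_of_nonneg_mul_inner {v u : E} {s : ℝ} (hs : 0 ≤ s * ⟪v, u⟫) :
    ‖v‖ ≤ ‖v + s • u‖ := by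
  refine (sq_le_sq₀ (norm_nonneg _) (norm_nonneg _)).1 ?_
  rw [norm_add_sq_real, real_inner_smul_right]
  nlinarith [sq_nonneg ‖s • u‖]

theorem dist_le_dist_add_smul_of_nonneg_mul_inner {x p u : E} {s : ℝ}
    (hs : 0 ≤ s * ⟪x - p, u⟫) : dist x p ≤ dist (x + s • u) p := by
  rw [dist_eq_norm, dist_eq_norm, add_sub_right_comm]
  exact norm_le_norm_add_smul_of_nonneg_mul_inner hs

end

/-- Optimality test on a chord: if two farthest indices at `x₀ = c + t₀ • u` have
directions on different sides of the perpendicular to the chord, then `x₀` minimizes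
`F` along the line `{c + t • u}`. -/
theorem constrained_center_optimality_test {ι : Type*} [Fintype ι] [Nonempty ι]
    (q : ι → EuclideanSpace ℝ (Fin 2)) (f : ι → ℝ)
    (F : EuclideanSpace ℝ (Fin 2) → ℝ)
    (hF : ∀ x, F x = Finset.univ.sup' Finset.univ_nonempty fun i => dist x (q i) + f i)
    (c u x₀ : EuclideanSpace ℝ (Fin 2)) (t₀ : ℝ) (hx₀ : x₀ = c + t₀ • u)
    (h : ∃ i j : ι, dist x₀ (q i) + f i = F x₀ ∧ dist x₀ (q j) + f j = F x₀ ∧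
      0 ≤ ⟪x₀ - q i, u⟫ ∧ ⟪x₀ - q j, u⟫ ≤ 0) :
    ∀ t : ℝ, F x₀ ≤ F (c + t • u) := by
  obtain ⟨i, j, hi, hj, hiu, hju⟩ := h
  intro t
  have hline : c + t • u = x₀ + (t - t₀) • u := by rw [hx₀]; module
  obtain ⟨k, hk, hku⟩ :
      ∃ k, dist x₀ (q k) + f k = F x₀ ∧ 0 ≤ (t - t₀) * ⟪x₀ - q k, u⟫ := by
    rcases le_total t₀ t with ht | ht
    · exact ⟨i, hi, mul_nonneg (sub_nonneg.2 ht) hiu⟩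
    · exact ⟨j, hj, mul_nonneg_of_nonpos_of_nonpos (sub_nonpos.2 ht) hju⟩
  calc F x₀ = dist x₀ (q k) + f k := hk.symm
    _ ≤ dist (c + t • u) (q k) + f k := by
        rw [hline]
        gcongr
        exact dist_le_dist_add_smul_of_nonneg_mul_inner hku
    _ ≤ F (c + t • u) := by
        rw [hF]
        exact Finset.le_sup' (fun k => dist (c + t • u) (q k) + f k) (Finset.mem_univ k)
end

section
/- Global optimality criterion: let ι be a nonempty finite index set, q : ι → ℝ², f : ι → ℝ, F(x) = max_{i ∈ ι} (dist(x, q_i) + f_i), and c ∈ ℝ². If for every u ∈ ℝ² with u ≠ 0 there exists an index i with dist(c, q_i) + f_i = F(c) and ⟨c − q_i, u⟩ ≥ 0, then F(c) ≤ F(x) for all x ∈ ℝ². (This is the Euclidean form of the criterion 'if the directions to the farthest neighbors do not lie in an open halfplane through c, then c is the geodesic center'.) -/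
open scoped RealInnerProductSpace

/-! Take `x` and apply the hypothesis to the direction `x - c`: it gives a farthest index `i`
at `c` with `⟪c - q i, x - c⟫ ≥ 0`. Expanding `‖x - q i‖² = ‖(x - c) + (c - q i)‖²` shows
that `x` is then at least as far from `q i` as `c` is, so `F x ≥ dist x (q i) + f i ≥ F c`. -/

theorem dist_le_dist_of_inner_sub_nonneg {E : Type*} [NormedAddCommGroup E]
    [InnerProductSpace ℝ E] {c p x : E} (h : 0 ≤ ⟪c - p, x - c⟫) : dist c p ≤ dist x p := by
  have hsq : ‖x - p‖ ^ 2 = ‖x - c‖ ^ 2 + 2 * ⟪x - c, c - p⟫ + ‖c - p‖ ^ 2 := by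
    rw [← norm_add_sq_real, sub_add_sub_cancel]
  rw [dist_eq_norm, dist_eq_norm, ← sq_le_sq₀ (norm_nonneg _) (norm_nonneg _), hsq,
    real_inner_comm]
  linarith [sq_nonneg ‖x - c‖]

/-- Global optimality criterion: if for every nonzero direction `u` some farthest
index `i` at `c` satisfies `⟪c - q i, u⟫ ≥ 0`, then `c` is a global minimizer of `F`. -/
theorem global_optimality_criterion {ι : Type*} [Fintype ι] [Nonempty ι]
    (q : ι → EuclideanSpace ℝ (Fin 2)) (f : ι → ℝ)
    (F : EuclideanSpace ℝ (Fin 2) → ℝ)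
    (hF : ∀ x, F x = Finset.univ.sup' Finset.univ_nonempty fun i => dist x (q i) + f i)
    (c : EuclideanSpace ℝ (Fin 2))
    (h : ∀ u : EuclideanSpace ℝ (Fin 2), u ≠ 0 →
      ∃ i, dist c (q i) + f i = F c ∧ 0 ≤ ⟪c - q i, u⟫) :
    ∀ x, F c ≤ F x := by
  intro x
  rcases eq_or_ne x c with rfl | hx
  · exact le_rfl
  obtain ⟨i, hi_max, hi_inner⟩ := h (x - c) (sub_ne_zero.mpr hx)
  calc F c = dist c (q i) + f i := hi_max.symm
    _ ≤ dist x (q i) + f i := by gcongr; exact dist_le_dist_of_inner_sub_nonneg hi_inner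
    _ ≤ F x := hF x ▸ Finset.le_sup' (fun i => dist x (q i) + f i) (Finset.mem_univ i)
end

section
/- Existence and uniqueness of the constrained center on a line: let ι be a nonempty finite index set, q : ι → ℝ², f : ι → ℝ, F(x) = max_{i ∈ ι} (dist(x, q_i) + f_i), and let c, u ∈ ℝ² with u ≠ 0. Then there exists a unique t* ∈ ℝ such that F(c + t*·u) ≤ F(c + t·u) for all t ∈ ℝ; that is, the center of the smallest circle enclosing the circles C(q_i, f_i) constrained to lie on the line {c + t·u : t ∈ ℝ} exists and is unique. -/
open Finset

/-- In a strictly convex space, the distance from the midpoint to any point is strictly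
less than the max of the distances from the endpoints, provided the endpoints differ. -/
lemma dist_midpt_lt_max {E : Type*} [NormedAddCommGroup E] [NormedSpace ℝ E]
    [StrictConvexSpace ℝ E] {x y : E} (p : E) (hxy : x ≠ y) :
    ‖(1 / 2 : ℝ) • (x + y) - p‖ < max ‖x - p‖ ‖y - p‖ := by
  have key : (1 / 2 : ℝ) • (x + y) - p = (1 / 2 : ℝ) • ((x - p) + (y - p)) := by
    rw [smul_add, smul_add]; module
  rw [key]
  set a := x - p
  set b := y - p
  have hab : a ≠ b := fun h => hxy (by simpa [a, b, sub_left_inj] using h)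
  rcases eq_or_ne ‖a‖ ‖b‖ with h | h
  · exact (norm_midpoint_lt_iff h).mpr hab |>.trans_le (le_max_left _ _)
  · have hle : ‖(1 / 2 : ℝ) • (a + b)‖ ≤ (‖a‖ + ‖b‖) / 2 := by
      rw [norm_smul, Real.norm_eq_abs]
      have h2 : |(1 / 2 : ℝ)| = 1 / 2 := by norm_num
      rw [h2]
      linarith [norm_add_le a b]
    refine hle.trans_lt ?_
    rcases lt_or_gt_of_ne h with h' | h'
    · exact lt_max_of_lt_right (by linarith)
    · exact lt_max_of_lt_left (by linarith)

/-- Existence and uniqueness of the constrained center on a line: `F` restricted to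
the line `{c + t • u : t ∈ ℝ}` (with `u ≠ 0`) has a unique minimizer. -/
theorem constrained_center_exists_unique {ι : Type*} [Fintype ι] [Nonempty ι]
    (q : ι → EuclideanSpace ℝ (Fin 2)) (f : ι → ℝ)
    (F : EuclideanSpace ℝ (Fin 2) → ℝ)
    (hF : ∀ x, F x = Finset.univ.sup' Finset.univ_nonempty fun i => dist x (q i) + f i)
    (c u : EuclideanSpace ℝ (Fin 2)) (hu : u ≠ 0) :
    ∃! t : ℝ, ∀ t' : ℝ, F (c + t • u) ≤ F (c + t' • u) := by
  -- continuity
  have hgc : Continuous fun t : ℝ => F (c + t • u) := by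
    have : (fun t : ℝ => F (c + t • u)) = fun t => Finset.univ.sup' Finset.univ_nonempty
        (fun i => dist (c + t • u) (q i) + f i) := by
      funext t; rw [hF]
    rw [this]
    apply Continuous.finset_sup'_apply Finset.univ_nonempty
    intro i _
    exact (Continuous.dist (by continuity) continuous_const).add continuous_const
  -- coercivity
  obtain ⟨i0⟩ := ‹Nonempty ι›
  have hco : Filter.Tendsto (fun t : ℝ => F (c + t • u)) (Filter.cocompact ℝ) Filter.atTop := by
    have hbound : ∀ t : ℝ, |t| * ‖u‖ - dist (q i0) c + f i0 ≤ F (c + t • u) := by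
      intro t
      have h1 : dist (c + t • u) (q i0) + f i0 ≤ F (c + t • u) := by
        rw [hF]
        exact Finset.le_sup' (fun j => dist (c + t • u) (q j) + f j) (Finset.mem_univ i0)
      have h2 : |t| * ‖u‖ - dist (q i0) c ≤ dist (c + t • u) (q i0) := by
        have htri := dist_triangle (c + t • u) (q i0) c
        have hd : dist (c + t • u) c = |t| * ‖u‖ := by
          rw [dist_eq_norm, add_sub_cancel_left, norm_smul, Real.norm_eq_abs]
        linarith
      linarith
    apply Filter.tendsto_atTop_mono hbound
    have habs : Filter.Tendsto (fun t : ℝ => |t|) (Filter.cocompact ℝ) Filter.atTop := by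
      exact (tendsto_norm_cocompact_atTop (E := ℝ)).congr (fun t => Real.norm_eq_abs t)
    have hnu : 0 < ‖u‖ := norm_pos_iff.mpr hu
    exact Filter.tendsto_atTop_add_const_right _ _
      (Filter.tendsto_atTop_add_const_right _ _ (habs.atTop_mul_const hnu))
  obtain ⟨t0, ht0⟩ := hgc.exists_forall_le hco
  refine ⟨t0, ht0, fun t1 ht1 => ?_⟩
  by_contra hne
  have hmin : F (c + t1 • u) = F (c + t0 • u) := le_antisymm (ht1 t0) (ht0 t1)
  set m : ℝ := (t1 + t0) / 2 with hm
  have hxy : c + t1 • u ≠ c + t0 • u := by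
    intro h
    apply hne
    rw [add_right_inj] at h
    have h' := sub_eq_zero.mpr h
    rw [← sub_smul, smul_eq_zero] at h'
    rcases h' with h' | h'
    · exact sub_eq_zero.mp h'
    · exact absurd h' hu
  obtain ⟨i, _, hi⟩ := Finset.exists_mem_eq_sup' (Finset.univ_nonempty (α := ι))
    (fun i => dist (c + m • u) (q i) + f i)
  have hmid : c + m • u = (1 / 2 : ℝ) • ((c + t1 • u) + (c + t0 • u)) := by
    rw [hm]; module
  have hlt : dist (c + m • u) (q i) <
      max (dist (c + t1 • u) (q i)) (dist (c + t0 • u) (q i)) := by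
    simp only [dist_eq_norm, hmid]
    exact dist_midpt_lt_max _ hxy
  have h1 : dist (c + t1 • u) (q i) + f i ≤ F (c + t1 • u) := by
    rw [hF]; exact Finset.le_sup' (fun j => dist (c + t1 • u) (q j) + f j) (Finset.mem_univ i)
  have h2 : dist (c + t0 • u) (q i) + f i ≤ F (c + t0 • u) := by
    rw [hF]; exact Finset.le_sup' (fun j => dist (c + t0 • u) (q j) + f j) (Finset.mem_univ i)
  have hgm : F (c + m • u) = dist (c + m • u) (q i) + f i := by rw [hF]; exact hi
  have hcontra : F (c + m • u) < F (c + t0 • u) := by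
    rw [hgm]
    rcases max_cases (dist (c + t1 • u) (q i)) (dist (c + t0 • u) (q i)) with ⟨he, _⟩ | ⟨he, _⟩
    · rw [he] at hlt; linarith [hmin ▸ h1]
    · rw [he] at hlt; linarith
  exact absurd (ht0 m) (not_le.mpr hcontra)
end
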